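/- arXiv:2005.14035 — 10 statements merged into one kernel-verified Lean document; each statement's English description precedes it below -/
import Mathlib

section
/- For every c ≥ 1/2 and every t > 0, the double inequality (c/(2(1+c)))·t < log(1 + 2c·sinh(t/2)) < c·t holds. -/
/-!
Put `y = t / 2` and compare both sides after exponentiating. By convexity of `exp`,
`exp (p * y)` lies below `1 + p * (exp y - 1)` when `0 ≤ p ≤ 1` (Bernoulli) and above it when
`1 ≤ p`. Since `exp y - 1 < 2 * sinh y < 2 * (exp y - 1)` for `y > 0`, taking
`p = c / (1 + c) ≤ min 1 c` gives the lower bound and `p = 2 * c ≥ 1` the upper one.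
-/

open Real

lemma Real.exp_mul_le_one_add_mul_exp_sub_one {p : ℝ} (x : ℝ) (hp₀ : 0 ≤ p) (hp₁ : p ≤ 1) :
    exp (p * x) ≤ 1 + p * (exp x - 1) := by
  have h := rpow_one_add_le_one_add_mul_self (s := exp x - 1) (by linarith [exp_pos x]) hp₀ hp₁
  rwa [add_sub_cancel, ← exp_mul, mul_comm] at h

lemma Real.one_add_mul_exp_sub_one_le_exp_mul {p : ℝ} (x : ℝ) (hp : 1 ≤ p) :
    1 + p * (exp x - 1) ≤ exp (p * x) := by
  have h := one_add_mul_self_le_rpow_one_add (s := exp x - 1) (by linarith [exp_pos x]) hp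
  rwa [add_sub_cancel, ← exp_mul, mul_comm x] at h

lemma Real.sinh_lt_exp_sub_one {x : ℝ} (hx : x ≠ 0) : sinh x < exp x - 1 := by
  linarith [cosh_add_sinh x, one_lt_cosh.2 hx]

lemma Real.exp_sub_one_lt_two_mul_sinh {x : ℝ} (hx : 0 < x) : exp x - 1 < 2 * sinh x := by
  have : exp (-x) < 1 := exp_lt_one_iff.2 (neg_lt_zero.2 hx)
  rw [sinh_eq]
  linarith

lemma Real.mul_lt_log_one_add_two_mul_mul_sinh {c y : ℝ} (hc : 0 < c) (hy : 0 < y) :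
    c / (1 + c) * y < log (1 + 2 * c * sinh y) := by
  have hp₀ : 0 ≤ c / (1 + c) := by positivity
  have hp₁ : c / (1 + c) ≤ 1 := (div_le_one (by linarith)).2 (by linarith)
  have hpc : c / (1 + c) ≤ c := div_le_self hc.le (by linarith)
  have hsinh : 0 < sinh y := sinh_pos_iff.2 hy
  rw [lt_log_iff_exp_lt (by positivity)]
  calc exp (c / (1 + c) * y) ≤ 1 + c / (1 + c) * (exp y - 1) :=
        exp_mul_le_one_add_mul_exp_sub_one y hp₀ hp₁
    _ < 1 + c / (1 + c) * (2 * sinh y) := by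
        gcongr
        exact exp_sub_one_lt_two_mul_sinh hy
    _ ≤ 1 + 2 * c * sinh y := by nlinarith

lemma Real.log_one_add_two_mul_mul_sinh_lt {c y : ℝ} (hc : 1 / 2 ≤ c) (hy : 0 < y) :
    log (1 + 2 * c * sinh y) < 2 * c * y := by
  have hsinh : 0 < sinh y := sinh_pos_iff.2 hy
  rw [log_lt_iff_lt_exp (by positivity)]
  calc 1 + 2 * c * sinh y < 1 + 2 * c * (exp y - 1) := by
        gcongr
        exact sinh_lt_exp_sub_one hy.ne'
    _ ≤ exp (2 * c * y) := one_add_mul_exp_sub_one_le_exp_mul y (by linarith)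

theorem Fc_double_inequality (c t : ℝ) (hc : c ≥ 1 / 2) (ht : 0 < t) :
    c / (2 * (1 + c)) * t < Real.log (1 + 2 * c * Real.sinh (t / 2)) ∧
    Real.log (1 + 2 * c * Real.sinh (t / 2)) < c * t := by
  have hy : 0 < t / 2 := half_pos ht
  have hc₀ : 0 < c := by linarith
  constructor
  · have h := mul_lt_log_one_add_two_mul_mul_sinh hc₀ hy
    rwa [show c / (1 + c) * (t / 2) = c / (2 * (1 + c)) * t by field_simp] at h
  · have h := log_one_add_two_mul_mul_sinh_lt hc hy
    rwa [show 2 * c * (t / 2) = c * t by ring] at h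
end

section
/- If c ≥ 1, then for all t > 0, (1/2)·t < log(1 + 2c·sinh(t/2)) < c·t. -/
/-!
Put `x = t / 2`. The lower bound is `exp x < 1 + 2 sinh x`, i.e. `exp (-x) < 1`. For the upper
bound, `exp (2x) - 1 = 2 exp x · sinh x > 2 sinh x`, and Bernoulli's inequality
`1 + c s ≤ (1 + s) ^ c` for `c ≥ 1` with `s = exp (2x) - 1` gives `1 + 2c sinh x < exp (2cx)`.
-/

open Real

namespace Real

lemma exp_lt_one_add_two_mul_sinh {x : ℝ} (hx : 0 < x) : exp x < 1 + 2 * sinh x := by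
  have : exp (-x) < 1 := exp_lt_one_iff.mpr (neg_neg_of_pos hx)
  rw [sinh_eq]
  linarith

lemma exp_two_mul_sub_one (x : ℝ) : exp (2 * x) - 1 = 2 * exp x * sinh x := by
  rw [sinh_eq, two_mul, exp_add, exp_neg]
  field_simp

lemma two_mul_sinh_lt_exp_two_mul_sub_one {x : ℝ} (hx : 0 < x) :
    2 * sinh x < exp (2 * x) - 1 := by
  rw [exp_two_mul_sub_one, mul_right_comm]
  exact lt_mul_of_one_lt_right (mul_pos two_pos (sinh_pos_iff.mpr hx)) (one_lt_exp_iff.mpr hx)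

lemma lt_log_one_add_two_mul_mul_sinh {c x : ℝ} (hc : 1 ≤ c) (hx : 0 < x) :
    x < log (1 + 2 * c * sinh x) := by
  have hs : 0 < sinh x := sinh_pos_iff.mpr hx
  have hexp : exp x < 1 + 2 * c * sinh x := calc
    exp x < 1 + 2 * sinh x := exp_lt_one_add_two_mul_sinh hx
    _ ≤ 1 + 2 * c * sinh x := by nlinarith
  rwa [lt_log_iff_exp_lt (by linarith [exp_pos x])]

lemma log_one_add_two_mul_mul_sinh_lt_s2 {c x : ℝ} (hc : 1 ≤ c) (hx : 0 < x) :
    log (1 + 2 * c * sinh x) < 2 * x * c := by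
  have hs : 0 < sinh x := sinh_pos_iff.mpr hx
  have hc₀ : 0 < c := zero_lt_one.trans_le hc
  rw [log_lt_iff_lt_exp (by positivity), exp_mul]
  calc 1 + 2 * c * sinh x = 1 + c * (2 * sinh x) := by ring
    _ < 1 + c * (exp (2 * x) - 1) := by gcongr; exact two_mul_sinh_lt_exp_two_mul_sub_one hx
    _ ≤ (1 + (exp (2 * x) - 1)) ^ c :=
      one_add_mul_self_le_rpow_one_add (by linarith [exp_pos (2 * x)]) hc
    _ = exp (2 * x) ^ c := by rw [add_sub_cancel]

end Real

theorem Fc_bounds_c_ge_one (c t : ℝ) (hc : 1 ≤ c) (ht : 0 < t) :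
    (1 / 2) * t < Real.log (1 + 2 * c * Real.sinh (t / 2)) ∧
    Real.log (1 + 2 * c * Real.sinh (t / 2)) < c * t := by
  have hx : 0 < t / 2 := half_pos ht
  constructor
  · convert lt_log_one_add_two_mul_mul_sinh hc hx using 1
    ring
  · convert log_one_add_two_mul_mul_sinh_lt_s2 hc hx using 1
    ring
end

section
/- For c ≥ 1, the function t ↦ F_c(t)/t, where F_c(t) = log(1 + 2c·sinh(t/2)), is strictly decreasing on (0, ∞). -/
/-!
With `D(t) = 1 + 2c·sinh(t/2)`, the quotient `log D(t) / t` is strictly decreasing as soon as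
`t · (log D)'(t) < log D(t)`, i.e. `c·t·cosh(t/2) < D(t)·log D(t)`. The difference
`K(t) = D log D - c t cosh(t/2)` vanishes at `0` and has derivative
`c cosh(t/2) log D - (c t / 2) sinh(t/2)`; since `c ≥ 1` gives `D(t) ≥ exp(t/2)`, this is at least
`(c t / 2)(cosh - sinh)(t/2) = (c t / 2) exp(-t/2) > 0`.
-/

open Real Set

theorem strictAntiOn_div_self_of_mul_deriv_lt {f f' : ℝ → ℝ}
    (hf : ∀ x ∈ Ioi (0 : ℝ), HasDerivAt f (f' x) x) (h : ∀ x ∈ Ioi (0 : ℝ), x * f' x < f x) :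
    StrictAntiOn (fun x => f x / x) (Ioi 0) := by
  refine strictAntiOn_of_deriv_neg (convex_Ioi 0) ?_ fun x hx => ?_
  · exact ContinuousOn.div (fun x hx => (hf x hx).continuousAt.continuousWithinAt)
      continuousOn_id fun x hx => ne_of_gt hx
  · rw [interior_Ioi] at hx
    have hx : 0 < x := hx
    have hquot : HasDerivAt (fun y => f y / y) ((f' x * x - f x * 1) / x ^ 2) x :=
      (hf x hx).div (hasDerivAt_id' x) hx.ne'
    rw [hquot.deriv]
    refine div_neg_of_neg_of_pos ?_ (by positivity)
    linarith [h x hx]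

section

variable {c t : ℝ}

lemma one_add_two_mul_sinh_half_pos (hc : 0 ≤ c) (ht : 0 ≤ t) : 0 < 1 + 2 * c * sinh (t / 2) := by
  have : 0 ≤ sinh (t / 2) := sinh_nonneg_iff.mpr (by linarith)
  positivity

lemma half_le_log_one_add_two_mul_sinh_half (hc : 1 ≤ c) (ht : 0 ≤ t) :
    t / 2 ≤ log (1 + 2 * c * sinh (t / 2)) := by
  have hsinh : 0 ≤ sinh (t / 2) := sinh_nonneg_iff.mpr (by linarith)
  have hexp_neg : exp (-(t / 2)) ≤ 1 := exp_le_one_iff.mpr (by linarith)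
  rw [le_log_iff_exp_le (one_add_two_mul_sinh_half_pos (by linarith) ht)]
  nlinarith [sinh_eq (t / 2)]

lemma hasDerivAt_one_add_two_mul_sinh_half (c x : ℝ) :
    HasDerivAt (fun t => 1 + 2 * c * sinh (t / 2)) (c * cosh (x / 2)) x := by
  have h := (((hasDerivAt_id' x).div_const 2).sinh.const_mul (2 * c)).const_add 1
  exact h.congr_deriv (by ring)

lemma mul_mul_cosh_half_lt_mul_log (hc : 1 ≤ c) (ht : 0 < t) :
    c * t * cosh (t / 2) < (1 + 2 * c * sinh (t / 2)) * log (1 + 2 * c * sinh (t / 2)) := by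
  set D : ℝ → ℝ := fun t => 1 + 2 * c * sinh (t / 2)
  set K : ℝ → ℝ := fun t => D t * log (D t) - c * t * cosh (t / 2)
  have hD_pos : ∀ x ∈ Ici (0 : ℝ), 0 < D x :=
    fun x hx => one_add_two_mul_sinh_half_pos (by linarith) hx
  have hK : ∀ x ∈ Ici (0 : ℝ),
      HasDerivAt K (c * cosh (x / 2) * log (D x) - c * x / 2 * sinh (x / 2)) x := by
    intro x hx
    have hDx := hasDerivAt_one_add_two_mul_sinh_half c x
    have hcosh := ((hasDerivAt_id' x).div_const 2).cosh
    refine ((hDx.mul (hDx.log (hD_pos x hx).ne')).sub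
      (((hasDerivAt_id' x).const_mul c).mul hcosh)).congr_deriv ?_
    rw [mul_div_cancel₀ _ (hD_pos x hx).ne']
    ring
  have hK_mono : StrictMonoOn K (Ici 0) := by
    refine strictMonoOn_of_deriv_pos (convex_Ici 0)
      (fun x hx => (hK x hx).continuousAt.continuousWithinAt) fun x hx => ?_
    rw [interior_Ici] at hx
    have hx : 0 < x := hx
    rw [(hK x hx.le).deriv]
    have hlog : x / 2 ≤ log (D x) := half_le_log_one_add_two_mul_sinh_half hc hx.le
    have hcosh_pos : 0 < c * cosh (x / 2) := by positivity
    have hgap : c * cosh (x / 2) * (x / 2) - c * x / 2 * sinh (x / 2)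
        = c * (x / 2) * exp (-(x / 2)) := by
      rw [← cosh_sub_sinh]; ring
    have hgap_pos : 0 < c * (x / 2) * exp (-(x / 2)) := by positivity
    linarith [mul_le_mul_of_nonneg_left hlog hcosh_pos.le]
  have := hK_mono self_mem_Ici ht.le ht
  simp only [K, D, zero_div, sinh_zero, mul_zero, add_zero, log_one, zero_mul, sub_zero] at this
  linarith

end

theorem Fc_div_t_strictAnti (c : ℝ) (hc : 1 ≤ c) :
    StrictAntiOn (fun t : ℝ => Real.log (1 + 2 * c * Real.sinh (t / 2)) / t)
      (Set.Ioi (0 : ℝ)) := by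
  have hD_pos : ∀ x ∈ Ioi (0 : ℝ), 0 < 1 + 2 * c * sinh (x / 2) :=
    fun x hx => one_add_two_mul_sinh_half_pos (by linarith) (le_of_lt hx)
  refine strictAntiOn_div_self_of_mul_deriv_lt
    (fun x hx => (hasDerivAt_one_add_two_mul_sinh_half c x).log (hD_pos x hx).ne') fun x hx => ?_
  rw [mul_div_assoc', div_lt_iff₀ (hD_pos x hx), ← mul_assoc, mul_comm x c, mul_comm (log _)]
  exact mul_mul_cosh_half_lt_mul_log hc hx
end

section
/- For every c > 0 and every t > 0, log(1 + 2c·sinh(t/2)) ≤ (t² + (2c+1)t)/(2(t+1)). -/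
/-!
Since `log` is concave, `log x ≤ log a + x / a - 1` for every `a > 0`. Write `s = sinh (t/2)`.
Taking `a = 2 s (t + 1) / t`, the value of `1 + 2 c s` at the `c` maximizing
`log (1 + 2 c s) - c t / (t + 1)`, and bounding `log a` by the same tangent line at
`exp (t/2)` reduces the claim to `t / 2 ≤ s` and the Padé-type bound `(1 + x) sinh x ≤ x exp x`
for `x ≥ 0`, which is `tanh x ≤ x` in disguise.
-/

open Real Set

namespace Real

theorem log_le_log_add_div_sub_one {x a : ℝ} (hx : 0 < x) (ha : 0 < a) :
    log x ≤ log a + x / a - 1 := by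
  have h := log_le_sub_one_of_pos (div_pos hx ha)
  rw [log_div hx.ne' ha.ne'] at h
  linarith

theorem sinh_le_mul_cosh {x : ℝ} (hx : 0 ≤ x) : sinh x ≤ x * cosh x := by
  have hderiv (y : ℝ) : HasDerivAt (fun y => y * cosh y - sinh y) (y * sinh y) y :=
    (((hasDerivAt_id' y).mul (hasDerivAt_cosh y)).sub (hasDerivAt_sinh y)).congr_deriv (by ring)
  have hmono : MonotoneOn (fun y => y * cosh y - sinh y) (Ici 0) := by
    refine monotoneOn_of_deriv_nonneg (convex_Ici 0) (by fun_prop) (by fun_prop) fun y hy => ?_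
    rw [interior_Ici] at hy
    rw [(hderiv y).deriv]
    exact mul_nonneg hy.le (sinh_nonneg_iff.mpr hy.le)
  simpa using hmono self_mem_Ici hx hx

theorem one_add_mul_sinh_le_mul_exp {x : ℝ} (hx : 0 ≤ x) : (1 + x) * sinh x ≤ x * exp x := by
  rw [← cosh_add_sinh]
  nlinarith [sinh_le_mul_cosh hx]

end Real

theorem Fc_upper_rational_bound (c t : ℝ) (hc : 0 < c) (ht : 0 < t) :
    Real.log (1 + 2 * c * Real.sinh (t / 2)) ≤ (t ^ 2 + (2 * c + 1) * t) / (2 * (t + 1)) := by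
  set s := sinh (t / 2)
  have hts : t / 2 ≤ s := self_le_sinh_iff.mpr (by positivity)
  have hs : 0 < s := by linarith
  set a := 2 * s * (t + 1) / t
  have ha : 0 < a := by positivity
  have htangent := log_le_log_add_div_sub_one (by positivity : 0 < 1 + 2 * c * s) ha
  have hlog_a : log a ≤ t / 2 + a / exp (t / 2) - 1 := by
    simpa using log_le_log_add_div_sub_one ha (exp_pos (t / 2))
  have ha_exp : a / exp (t / 2) ≤ 2 * (t + 1) / (t + 2) := by
    rw [div_le_div_iff₀ (exp_pos _) (by positivity), div_mul_eq_mul_div, div_le_iff₀ ht]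
    nlinarith [one_add_mul_sinh_le_mul_exp (by positivity : 0 ≤ t / 2)]
  have hdiv_a : (1 + 2 * c * s) / a ≤ 1 / (t + 1) + c * t / (t + 1) := by
    rw [div_div_eq_mul_div, ← add_div, div_le_div_iff₀ (by positivity) (by positivity)]
    nlinarith [mul_le_mul_of_nonneg_right hts (by positivity : 0 ≤ t + 1)]
  have hRHS : (t ^ 2 + (2 * c + 1) * t) / (2 * (t + 1)) = t / 2 + c * t / (t + 1) := by
    field_simp
    ring
  have hsum : 2 * (t + 1) / (t + 2) + 1 / (t + 1) ≤ 2 := by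
    rw [div_add_div _ _ (by positivity) (by positivity), div_le_iff₀ (by positivity)]
    nlinarith
  rw [hRHS]
  linarith
end

section
/- For c ≥ 1 and t ≥ 0, (t/(t+1))·log c + t/2 ≤ log(1 + 2c·sinh(t/2)), with equality if and only if t = 0. -/
/-!
Exponentiating, it suffices to show `c ^ s * e^{t/2} < 1 + 2c sinh(t/2)` for `t > 0`, where
`s = t / (t + 1)`. Since `e^t ≥ 1 + t`, the exponent `s` is at most `w = 1 - e^{-t}`, and by
Bernoulli's inequality `c ^ w ≤ (1 - w) + w c`. Multiplying by `e^{t/2}` gives exactly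
`e^{-t/2} + 2c sinh(t/2)`, and `e^{-t/2} < 1`.
-/

open Real

lemma div_add_one_le_one_sub_exp_neg {t : ℝ} (ht : -1 < t) : t / (t + 1) ≤ 1 - exp (-t) := by
  have hexp : exp (-t) ≤ 1 / (t + 1) := by
    rw [exp_neg, ← one_div]
    exact one_div_le_one_div_of_le (by linarith) (add_one_le_exp t)
  have hdiv : t / (t + 1) = 1 - 1 / (t + 1) := by
    field_simp [show t + 1 ≠ 0 by linarith]
    ring
  linarith

lemma rpow_le_one_sub_add_mul {c w : ℝ} (hc : 0 ≤ c) (hw₀ : 0 ≤ w) (hw₁ : w ≤ 1) :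
    c ^ w ≤ 1 - w + w * c := by
  have h := rpow_one_add_le_one_add_mul_self (s := c - 1) (by linarith) hw₀ hw₁
  rw [add_sub_cancel] at h
  linarith

lemma exp_half_mul_one_sub_add_mul (c t : ℝ) :
    exp (t / 2) * (1 - (1 - exp (-t)) + (1 - exp (-t)) * c)
      = exp (-(t / 2)) + 2 * c * sinh (t / 2) := by
  have hhalf : exp (t / 2) * exp (-t) = exp (-(t / 2)) := by
    rw [← exp_add]
    ring_nf
  rw [sinh_eq]
  linear_combination (1 - c) * hhalf

lemma rpow_div_add_one_mul_exp_half_lt {c t : ℝ} (hc : 1 ≤ c) (ht : 0 < t) :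
    c ^ (t / (t + 1)) * exp (t / 2) < 1 + 2 * c * sinh (t / 2) := by
  set w := 1 - exp (-t) with hw
  have hw₀ : 0 ≤ w := by
    have := exp_le_one_iff.mpr (neg_nonpos.mpr ht.le)
    linarith
  have hw₁ : w ≤ 1 := by
    have := exp_pos (-t)
    linarith
  have hcw : c ^ (t / (t + 1)) ≤ 1 - w + w * c :=
    (rpow_le_rpow_of_exponent_le hc (div_add_one_le_one_sub_exp_neg (by linarith))).trans
      (rpow_le_one_sub_add_mul (by linarith) hw₀ hw₁)
  have hneg : exp (-(t / 2)) < 1 := exp_lt_one_iff.mpr (by linarith)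
  calc c ^ (t / (t + 1)) * exp (t / 2) ≤ (1 - w + w * c) * exp (t / 2) :=
        mul_le_mul_of_nonneg_right hcw (exp_pos _).le
    _ = exp (-(t / 2)) + 2 * c * sinh (t / 2) := by
        rw [mul_comm, hw, exp_half_mul_one_sub_add_mul]
    _ < 1 + 2 * c * sinh (t / 2) := by linarith

theorem Fc_lower_log_bound (c t : ℝ) (hc : 1 ≤ c) (ht : 0 ≤ t) :
    (t / (t + 1)) * Real.log c + t / 2 ≤ Real.log (1 + 2 * c * Real.sinh (t / 2)) ∧
    ((t / (t + 1)) * Real.log c + t / 2 = Real.log (1 + 2 * c * Real.sinh (t / 2)) ↔ t = 0) := by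
  rcases ht.eq_or_lt with rfl | ht
  · simp
  have hlt : (t / (t + 1)) * log c + t / 2 < log (1 + 2 * c * sinh (t / 2)) := by
    have hc₀ : 0 < c := by linarith
    calc (t / (t + 1)) * log c + t / 2 = log (c ^ (t / (t + 1)) * exp (t / 2)) := by
          rw [log_mul (by positivity) (exp_ne_zero _), log_rpow hc₀, log_exp]
      _ < log (1 + 2 * c * sinh (t / 2)) :=
          log_lt_log (by positivity) (rpow_div_add_one_mul_exp_half_lt hc ht)
  exact ⟨hlt.le, iff_of_false hlt.ne ht.ne'⟩
end

section
/- For 0 < c ≤ 1 and t > 0, the strict inequality c·t/2 < log(1 + 2c·sinh(t/2)) holds. -/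
/-! By convexity of `exp` on the segment `[0, s]`, `exp (c * s) ≤ 1 + c * (exp s - 1)` for
`c ∈ [0, 1]`, and `exp s - 1 < exp s - exp (-s) = 2 * sinh s` for `s > 0`. -/

namespace Real

lemma exp_mul_le_one_add_mul_exp_sub_one_s11 {c : ℝ} (hc0 : 0 ≤ c) (hc1 : c ≤ 1) (x : ℝ) :
    exp (c * x) ≤ 1 + c * (exp x - 1) :=
  calc
    exp (c * x) = exp ((1 - c) * 0 + c * x) := by ring_nf
    _ ≤ (1 - c) * exp 0 + c * exp x :=
        convexOn_exp.2 (Set.mem_univ _) (Set.mem_univ _) (by linarith) hc0 (by ring)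
    _ = 1 + c * (exp x - 1) := by rw [exp_zero]; ring

lemma exp_sub_one_lt_two_mul_sinh_s11 {x : ℝ} (hx : 0 < x) : exp x - 1 < 2 * sinh x := by
  have : exp (-x) < 1 := exp_lt_one_iff.2 (neg_neg_of_pos hx)
  rw [sinh_eq]
  linarith

end Real

theorem Fc_lower_bound_c_le_one (c t : ℝ) (hc0 : 0 < c) (hc1 : c ≤ 1) (ht : 0 < t) :
    c * t / 2 < Real.log (1 + 2 * c * Real.sinh (t / 2)) := by
  have hexp : Real.exp (c * (t / 2)) < 1 + 2 * c * Real.sinh (t / 2) :=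
    calc
      Real.exp (c * (t / 2)) ≤ 1 + c * (Real.exp (t / 2) - 1) :=
        Real.exp_mul_le_one_add_mul_exp_sub_one_s11 hc0.le hc1 _
      _ < 1 + c * (2 * Real.sinh (t / 2)) := by
        gcongr
        exact Real.exp_sub_one_lt_two_mul_sinh_s11 (half_pos ht)
      _ = 1 + 2 * c * Real.sinh (t / 2) := by ring
  rw [mul_div_assoc, Real.lt_log_iff_exp_lt (lt_trans (Real.exp_pos _) hexp)]
  exact hexp
end

section
/- For all c > 0 and t > 0, log(1 + 2c·sinh(t/2)) < log(1 + c·t) + c·(e^t − 1). -/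
/-!
Since `2 sinh (t/2) = e^{-t/2} (e^t - 1) < e^t - 1`, monotonicity of `log` and `log (1 + y) ≤ y`
bound the left side by `c (e^t - 1)`, and `log (1 + c t) > 0`.
-/

open Real

namespace Real

theorem two_mul_sinh_half_eq (x : ℝ) : 2 * sinh (x / 2) = exp (-(x / 2)) * (exp x - 1) := by
  have hx : exp x = exp (x / 2) * exp (x / 2) := by rw [← exp_add, add_halves]
  have hinv : exp (-(x / 2)) * exp (x / 2) = 1 := by rw [← exp_add, neg_add_cancel, exp_zero]
  rw [sinh_eq, hx]
  linear_combination (-exp (x / 2)) * hinv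

theorem two_mul_sinh_half_lt_exp_sub_one {x : ℝ} (hx : 0 < x) : 2 * sinh (x / 2) < exp x - 1 := by
  rw [two_mul_sinh_half_eq]
  exact mul_lt_of_lt_one_left (sub_pos.2 (one_lt_exp_iff.2 hx)) (exp_lt_one_iff.2 (by linarith))

end Real

theorem Fc_upper_exp_bound (c t : ℝ) (hc : 0 < c) (ht : 0 < t) :
    Real.log (1 + 2 * c * Real.sinh (t / 2)) <
      Real.log (1 + c * t) + c * (Real.exp t - 1) := by
  have hsinh : 0 < sinh (t / 2) := sinh_pos_iff.2 (half_pos ht)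
  have hlt : 2 * sinh (t / 2) < exp t - 1 := two_mul_sinh_half_lt_exp_sub_one ht
  calc log (1 + 2 * c * sinh (t / 2))
      < log (1 + c * (exp t - 1)) := log_lt_log (by positivity) (by nlinarith)
    _ ≤ c * (exp t - 1) := by
        linarith [log_le_sub_one_of_pos (x := 1 + c * (exp t - 1)) (by nlinarith)]
    _ < log (1 + c * t) + c * (exp t - 1) := by
        linarith [log_pos (x := 1 + c * t) (by nlinarith)]
end

section
/- For all t ≥ 0, log(1 + 2·sinh(t/2)) ≤ t/2 + log(5/4), with equality if and only if t = 2·log 2. -/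
/-!
With `u = exp x`, `(c + 1/(4c)) u - (1 + 2c sinh x) = (u - 2c)² / (4cu)`, so `1 + 2c sinh x` is
dominated by `(c + 1/(4c)) exp x`, with equality exactly when `exp x = 2c`; taking logarithms gives
the bound. The theorem is the case `c = 1`, `x = t/2`.
-/

open Real

section

variable {c : ℝ}

theorem mul_exp_sub_one_add_two_mul_mul_sinh (hc : c ≠ 0) (x : ℝ) :
    (c + (4 * c)⁻¹) * exp x - (1 + 2 * c * sinh x) = (exp x - 2 * c) ^ 2 / (4 * c * exp x) := by
  rw [sinh_eq, exp_neg]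
  field_simp
  ring

theorem one_add_two_mul_mul_sinh_le (hc : 0 < c) (x : ℝ) :
    1 + 2 * c * sinh x ≤ (c + (4 * c)⁻¹) * exp x := by
  have h := mul_exp_sub_one_add_two_mul_mul_sinh hc.ne' x
  have : 0 ≤ (exp x - 2 * c) ^ 2 / (4 * c * exp x) := by positivity
  linarith

theorem one_add_two_mul_mul_sinh_eq_iff (hc : 0 < c) (x : ℝ) :
    1 + 2 * c * sinh x = (c + (4 * c)⁻¹) * exp x ↔ exp x = 2 * c := by
  have h := mul_exp_sub_one_add_two_mul_mul_sinh hc.ne' x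
  rw [eq_comm, ← sub_eq_zero, h, div_eq_zero_iff, or_iff_left (by positivity), sq_eq_zero_iff,
    sub_eq_zero]

theorem log_one_add_two_mul_mul_sinh_le (hc : 0 < c) {x : ℝ} (hx : 0 ≤ x) :
    log (1 + 2 * c * sinh x) ≤ x + log (c + (4 * c)⁻¹) ∧
      (log (1 + 2 * c * sinh x) = x + log (c + (4 * c)⁻¹) ↔ x = log (2 * c)) := by
  have hpos : 0 < 1 + 2 * c * sinh x := by
    have := sinh_nonneg_iff.mpr hx
    positivity
  have hrhs : x + log (c + (4 * c)⁻¹) = log ((c + (4 * c)⁻¹) * exp x) := by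
    rw [log_mul (by positivity) (exp_ne_zero x), log_exp, add_comm]
  have hrhs_pos : 0 < (c + (4 * c)⁻¹) * exp x := by positivity
  rw [hrhs, log_le_log_iff hpos hrhs_pos, log_injOn_pos.eq_iff hpos hrhs_pos,
    one_add_two_mul_mul_sinh_eq_iff hc]
  refine ⟨one_add_two_mul_mul_sinh_le hc x, fun h ↦ ?_, fun h ↦ ?_⟩
  · rw [← h, log_exp]
  · rw [h, exp_log (by positivity)]

end

theorem F1_upper_bound (t : ℝ) (ht : 0 ≤ t) :
    Real.log (1 + 2 * Real.sinh (t / 2)) ≤ t / 2 + Real.log (5 / 4) ∧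
    (Real.log (1 + 2 * Real.sinh (t / 2)) = t / 2 + Real.log (5 / 4) ↔ t = 2 * Real.log 2) := by
  have h := log_one_add_two_mul_mul_sinh_le one_pos (x := t / 2) (by positivity)
  norm_num at h
  refine ⟨h.1, h.2.trans ?_⟩
  constructor <;> intro <;> linarith
end

section
/- Let G ⊂ ℝⁿ be a proper subdomain, c ≥ 1, and W(x,y) = log(1 + 2c·sinh(j_G(x,y)/2)). Then for all x, y ∈ G, L·j_G(x,y) ≤ W(x,y) ≤ U·j_G(x,y), where L = 1/2 + log(c)/(1 + j_G(x,y)) and U = (j_G(x,y) + 2c + 1)/(2(1 + j_G(x,y))). -/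
/-!
Write `a = exp (-t/2)` and `u = t / (1 + t)`, so that `1 + 2 c sinh (t/2) = exp (t/2) * g` with
`g = a + c (1 - a²)`. The elementary estimates `u ≤ 1 - a²`, `a - a² ≤ u` and `1 - a² ≤ u + u²`
squeeze `g` between `1 + (c - 1) u`, which dominates `c ^ u` by Bernoulli's inequality, and
`(1 + u) (1 + (c - 1) u)`, which is dominated by `exp u * exp ((c - 1) u) = exp (c u)`.
Taking logarithms gives `t/2 + u log c ≤ log (1 + 2 c sinh (t/2)) ≤ t/2 + c u`.
-/

open Real

lemma div_one_add_le_one_sub_exp_neg {t : ℝ} (ht : -1 < t) : t / (1 + t) ≤ 1 - exp (-t) := by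
  have ht1 : 0 < 1 + t := by linarith
  have hexp : exp (-t) ≤ 1 / (1 + t) := by
    rw [exp_neg, one_div]
    exact inv_anti₀ ht1 (by linarith [add_one_le_exp t])
  calc t / (1 + t) = 1 - 1 / (1 + t) := by field_simp; ring
    _ ≤ 1 - exp (-t) := by linarith

lemma exp_neg_eq_exp_neg_half_sq (t : ℝ) : exp (-t) = exp (-(t / 2)) ^ 2 := by
  rw [← exp_nat_mul]; ring_nf

lemma exp_neg_half_sub_exp_neg_le {t : ℝ} (ht : 0 ≤ t) :
    exp (-(t / 2)) - exp (-t) ≤ t / (1 + t) := by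
  rw [exp_neg_eq_exp_neg_half_sq t, le_div_iff₀ (by linarith)]
  set a := exp (-(t / 2))
  have ha : 1 - t / 2 ≤ a := by linarith [add_one_le_exp (-(t / 2))]
  rcases le_total t 1 with h | h
  · nlinarith [sq_nonneg (1 - a)]
  · nlinarith [sq_nonneg (2 * a - 1)]

lemma one_sub_exp_neg_le {t : ℝ} (ht : 0 ≤ t) :
    1 - exp (-t) ≤ t / (1 + t) + (t / (1 + t)) ^ 2 := by
  have ht1 : 0 < 1 + t := by linarith
  rcases le_total t 2 with h | h
  · have hsq : (1 - t / 2) ^ 2 ≤ exp (-t) := by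
      rw [exp_neg_eq_exp_neg_half_sq t]
      exact pow_le_pow_left₀ (by linarith) (by linarith [add_one_le_exp (-(t / 2))]) 2
    have hpoly : t - t ^ 2 / 4 ≤ t / (1 + t) + (t / (1 + t)) ^ 2 := by
      have hfrac : t / (1 + t) + (t / (1 + t)) ^ 2 = (t + 2 * t ^ 2) / (1 + t) ^ 2 := by
        field_simp; ring
      rw [hfrac, le_div_iff₀ (by positivity)]
      nlinarith [mul_nonneg ht (sq_nonneg (t - 1))]
    nlinarith
  · have hu : 2 / 3 ≤ t / (1 + t) := by rw [le_div_iff₀ ht1]; linarith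
    nlinarith [exp_pos (-t)]

lemma one_add_two_mul_sinh_half (c t : ℝ) :
    1 + 2 * c * sinh (t / 2) = exp (t / 2) * (exp (-(t / 2)) + c * (1 - exp (-t))) := by
  have h : exp (t / 2) * exp (-(t / 2)) = 1 := by rw [← exp_add]; simp
  rw [sinh_eq, exp_neg_eq_exp_neg_half_sq t]
  linear_combination (c * exp (-(t / 2)) - 1) * h

section SinhBounds

variable {c t : ℝ}

lemma le_log_one_add_two_mul_sinh_half (hc : 1 ≤ c) (ht : 0 ≤ t) :
    (1 / 2 + log c / (1 + t)) * t ≤ log (1 + 2 * c * sinh (t / 2)) := by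
  set u := t / (1 + t)
  have hu0 : 0 ≤ u := by positivity
  have hu1 : u ≤ 1 := div_le_one_of_le₀ (by linarith) (by linarith)
  have hg : 1 + (c - 1) * u ≤ exp (-(t / 2)) + c * (1 - exp (-t)) := by
    have ha : exp (-t) ≤ exp (-(t / 2)) := exp_le_exp.2 (by linarith)
    nlinarith [mul_le_mul_of_nonneg_left (div_one_add_le_one_sub_exp_neg (by linarith : -1 < t))
      (sub_nonneg.2 hc)]
  have hbernoulli : c ^ u ≤ 1 + (c - 1) * u := by
    simpa [mul_comm] using rpow_one_add_le_one_add_mul_self (s := c - 1) (by linarith) hu0 hu1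
  have hcu : 0 < c ^ u := rpow_pos_of_pos (by linarith) u
  calc (1 / 2 + log c / (1 + t)) * t = t / 2 + log (c ^ u) := by
        rw [log_rpow (by linarith)]; ring
    _ ≤ t / 2 + log (exp (-(t / 2)) + c * (1 - exp (-t))) := by gcongr; linarith
    _ = log (1 + 2 * c * sinh (t / 2)) := by
        rw [one_add_two_mul_sinh_half, log_mul (exp_pos _).ne' (by linarith), log_exp]

lemma log_one_add_two_mul_sinh_half_le (hc : 1 ≤ c) (ht : 0 ≤ t) :
    log (1 + 2 * c * sinh (t / 2)) ≤ ((t + 2 * c + 1) / (2 * (1 + t))) * t := by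
  set u := t / (1 + t)
  have hu0 : 0 ≤ u := by positivity
  have hg : exp (-(t / 2)) + c * (1 - exp (-t)) ≤ (1 + u) * (1 + (c - 1) * u) := by
    nlinarith [mul_le_mul_of_nonneg_left (one_sub_exp_neg_le ht) (sub_nonneg.2 hc),
      exp_neg_half_sub_exp_neg_le ht]
  have hexp : (1 + u) * (1 + (c - 1) * u) ≤ exp (c * u) := by
    rw [show c * u = u + (c - 1) * u by ring, exp_add]
    have h₁ := add_one_le_exp u
    have h₂ := add_one_le_exp ((c - 1) * u)
    gcongr <;> linarith [mul_nonneg (sub_nonneg.2 hc) hu0]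
  have hpos : 0 < exp (-(t / 2)) + c * (1 - exp (-t)) := by
    nlinarith [exp_pos (-(t / 2)), exp_le_one_iff.2 (by linarith : -t ≤ 0)]
  calc log (1 + 2 * c * sinh (t / 2))
      = t / 2 + log (exp (-(t / 2)) + c * (1 - exp (-t))) := by
        rw [one_add_two_mul_sinh_half, log_mul (exp_pos _).ne' hpos.ne', log_exp]
    _ ≤ t / 2 + log (exp (c * u)) := by gcongr; linarith
    _ = ((t + 2 * c + 1) / (2 * (1 + t))) * t := by
        rw [log_exp]; simp only [u]; field_simp; ring

end SinhBounds

theorem W_jG_bounds_general {n : ℕ} (G : Set (EuclideanSpace ℝ (Fin n)))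
    (c : ℝ) (hc : 1 ≤ c)
    (jG : EuclideanSpace ℝ (Fin n) → EuclideanSpace ℝ (Fin n) → ℝ)
    (hj : ∀ x y, jG x y =
      Real.log (1 + dist x y / min (Metric.infDist x Gᶜ) (Metric.infDist y Gᶜ)))
    (x y : EuclideanSpace ℝ (Fin n)) :
    (1 / 2 + Real.log c / (1 + jG x y)) * jG x y ≤
      Real.log (1 + 2 * c * Real.sinh (jG x y / 2)) ∧
    Real.log (1 + 2 * c * Real.sinh (jG x y / 2)) ≤
      ((jG x y + 2 * c + 1) / (2 * (1 + jG x y))) * jG x y := by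
  have hj_nonneg : 0 ≤ jG x y := by
    rw [hj]
    refine log_nonneg (le_add_of_nonneg_right (div_nonneg dist_nonneg ?_))
    exact le_min Metric.infDist_nonneg Metric.infDist_nonneg
  exact ⟨le_log_one_add_two_mul_sinh_half hc hj_nonneg,
    log_one_add_two_mul_sinh_half_le hc hj_nonneg⟩

theorem W_jG_bounds {n : ℕ} (G : Set (EuclideanSpace ℝ (Fin n)))
    (hG : IsOpen G) (hGc : IsConnected G) (hGne : G ≠ Set.univ)
    (c : ℝ) (hc : 1 ≤ c)
    (jG : EuclideanSpace ℝ (Fin n) → EuclideanSpace ℝ (Fin n) → ℝ)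
    (hj : ∀ x y, jG x y =
      Real.log (1 + dist x y / min (Metric.infDist x Gᶜ) (Metric.infDist y Gᶜ)))
    (x y : EuclideanSpace ℝ (Fin n)) (hx : x ∈ G) (hy : y ∈ G) :
    (1 / 2 + Real.log c / (1 + jG x y)) * jG x y ≤
      Real.log (1 + 2 * c * Real.sinh (jG x y / 2)) ∧
    Real.log (1 + 2 * c * Real.sinh (jG x y / 2)) ≤
      ((jG x y + 2 * c + 1) / (2 * (1 + jG x y))) * jG x y :=
  W_jG_bounds_general G c hc jG hj x y
end

section
/- For each fixed t > 0, the function E_t(c) = e^{t/2}·e^{ct/(t+1)} − 1 − c·(e^{t/2} − e^{−t/2}) satisfies E_t(c) > 0 for all c > 0. -/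
/-!
Put `x = c t / (t + 1)` and `A = (t + 1)(1 - e^{-t}) / t`. Since `e^{t/2} A = (t + 1)/t · 2 sinh (t/2)`,
the expression equals `e^{t/2} (e^x - A x) - 1`, and `e^x - A x ≥ A (1 - log A)` (tangent line of `exp`
at `log A`). It remains to show `A (1 - log A) > e^{-t/2}`: from `2 A log A ≤ A² - 1` we get
`A (1 - log A) ≥ 1 - (A - 1)² / 2`, and `A - 1 < min (t / 2, 1 / t)` makes `(A - 1)²` small enough.
-/

open Real

lemma mul_one_sub_log_le_exp_sub_mul {a : ℝ} (ha : 0 < a) (x : ℝ) :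
    a * (1 - log a) ≤ exp x - a * x := by
  have htangent := add_one_le_exp (x - log a)
  have hexp : exp x = a * exp (x - log a) := by rw [exp_sub, exp_log ha]; field_simp
  nlinarith

lemma two_mul_mul_log_le_sq_sub_one {x : ℝ} (hx : 1 ≤ x) : 2 * x * log x ≤ x ^ 2 - 1 := by
  have hx0 : 0 < x := by linarith
  have hsinh : log x ≤ (x - x⁻¹) / 2 := by
    rw [← sinh_log hx0]
    exact self_le_sinh_iff.mpr (log_nonneg hx)
  have hinv : x * x⁻¹ = 1 := mul_inv_cancel₀ hx0.ne'
  nlinarith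

lemma one_sub_sq_div_two_le_mul_one_sub_log {a : ℝ} (ha : 1 ≤ a) :
    1 - (a - 1) ^ 2 / 2 ≤ a * (1 - log a) := by
  nlinarith [two_mul_mul_log_le_sq_sub_one ha]

lemma one_sub_one_add_mul_exp_neg_pos {t : ℝ} (ht : 0 < t) : 0 < 1 - (1 + t) * exp (-t) := by
  have h := add_one_lt_exp ht.ne'
  have hprod : exp t * exp (-t) = 1 := by rw [← exp_add]; simp
  nlinarith [exp_pos (-t)]

/-- `1 - (1 + t) e^{-t} = ∫₀ᵗ s e^{-s} ds < ∫₀ᵗ s ds`. -/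
lemma one_sub_one_add_mul_exp_neg_lt {t : ℝ} (ht : 0 < t) :
    1 - (1 + t) * exp (-t) < t ^ 2 / 2 := by
  let f : ℝ → ℝ := fun s ↦ (1 + s) * exp (-s) - 1 + s ^ 2 / 2
  have hderiv (s : ℝ) : HasDerivAt f (s * (1 - exp (-s))) s := by
    have hexp : HasDerivAt (fun s : ℝ ↦ exp (-s)) (-exp (-s)) s := by
      simpa using (hasDerivAt_neg s).exp
    have := ((((hasDerivAt_id s).const_add 1).mul hexp).sub_const 1).add
      ((hasDerivAt_pow 2 s).div_const 2)
    exact this.congr_deriv (by simp; ring)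
  have hmono : StrictMonoOn f (Set.Ici 0) := by
    refine strictMonoOn_of_deriv_pos (convex_Ici 0)
      (fun s _ ↦ (hderiv s).continuousAt.continuousWithinAt) fun s hs ↦ ?_
    rw [interior_Ici, Set.mem_Ioi] at hs
    rw [(hderiv s).deriv]
    have : exp (-s) < 1 := exp_lt_one_iff.mpr (by linarith)
    nlinarith
  have := hmono (Set.mem_Ici.mpr le_rfl) ht.le ht
  simp only [f] at this
  norm_num at this
  linarith

noncomputable def expSlope (t : ℝ) : ℝ := (t + 1) / t * (1 - exp (-t))

lemma expSlope_sub_one_mul {t : ℝ} (ht : t ≠ 0) :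
    (expSlope t - 1) * t = 1 - (1 + t) * exp (-t) := by
  unfold expSlope
  field_simp
  ring

lemma one_lt_expSlope {t : ℝ} (ht : 0 < t) : 1 < expSlope t := by
  have h := expSlope_sub_one_mul ht.ne' ▸ one_sub_one_add_mul_exp_neg_pos ht
  nlinarith

lemma exp_half_mul_expSlope (t : ℝ) :
    exp (t / 2) * expSlope t = (t + 1) / t * (exp (t / 2) - exp (-(t / 2))) := by
  have hsplit : exp (t / 2) * exp (-t) = exp (-(t / 2)) := by rw [← exp_add]; ring_nf
  rw [expSlope, ← hsplit]
  ring

lemma sq_expSlope_sub_one_mul_lt {t : ℝ} (ht : 0 < t) :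
    (expSlope t - 1) ^ 2 * (2 + t) < 2 * t := by
  have hpos := sub_pos.mpr (one_lt_expSlope ht)
  have hsmall : (expSlope t - 1) * t < t ^ 2 / 2 :=
    expSlope_sub_one_mul ht.ne' ▸ one_sub_one_add_mul_exp_neg_lt ht
  have hlarge : (expSlope t - 1) * t < 1 := by
    rw [expSlope_sub_one_mul ht.ne']
    nlinarith [exp_pos (-t)]
  rcases le_or_gt t 2 with hle | hgt
  · have hhalf : expSlope t - 1 < t / 2 := by nlinarith
    nlinarith [mul_lt_mul'' hhalf hhalf hpos.le hpos.le]
  · have hsq : ((expSlope t - 1) * t) ^ 2 < 1 := pow_lt_one₀ (by positivity) hlarge two_ne_zero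
    nlinarith [mul_pos ht ht]

lemma exp_neg_half_lt_expSlope_mul_one_sub_log {t : ℝ} (ht : 0 < t) :
    exp (-(t / 2)) < expSlope t * (1 - log (expSlope t)) := by
  have hexp : exp (-(t / 2)) * (2 + t) ≤ 2 := by
    have h := add_one_le_exp (t / 2)
    have hprod : exp (-(t / 2)) * exp (t / 2) = 1 := by rw [← exp_add]; simp
    nlinarith [exp_pos (-(t / 2))]
  have hsq := sq_expSlope_sub_one_mul_lt ht
  have hlog := one_sub_sq_div_two_le_mul_one_sub_log (one_lt_expSlope ht).le
  nlinarith

theorem E_t_pos_general (t : ℝ) (ht : 0 < t) (c : ℝ) :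
    Real.exp (t / 2) * Real.exp (c * t / (t + 1)) - 1 -
      c * (Real.exp (t / 2) - Real.exp (-(t / 2))) > 0 := by
  set A := expSlope t
  set x := c * t / (t + 1) with hx
  have hrewrite : c * (exp (t / 2) - exp (-(t / 2))) = exp (t / 2) * (A * x) := by
    rw [← mul_assoc, exp_half_mul_expSlope t, hx]
    field_simp
  have hA := one_lt_expSlope ht
  calc exp (t / 2) * exp x - 1 - c * (exp (t / 2) - exp (-(t / 2)))
      = exp (t / 2) * (exp x - A * x) - 1 := by rw [hrewrite]; ring
    _ ≥ exp (t / 2) * (A * (1 - log A)) - 1 := by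
      gcongr
      exact mul_one_sub_log_le_exp_sub_mul (by linarith) x
    _ > exp (t / 2) * exp (-(t / 2)) - 1 := by
      gcongr
      exact exp_neg_half_lt_expSlope_mul_one_sub_log ht
    _ = 0 := by rw [← exp_add]; simp

theorem E_t_pos (t : ℝ) (ht : 0 < t) (c : ℝ) (hc : 0 < c) :
    Real.exp (t / 2) * Real.exp (c * t / (t + 1)) - 1 -
      c * (Real.exp (t / 2) - Real.exp (-(t / 2))) > 0 :=
  E_t_pos_general t ht c
end
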